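/- Let α, β, γ, δ, ε ∈ ℂ with δ = −3α, and let v : (0,1) → ℂ be six times differentiable and satisfy the Heun equation with parameters (α, β, γ, δ, ε) at every x ∈ (0,1). Then the fourth derivative w := v'''' satisfies the Heun equation with parameters (α, β−8, γ+4, δ+8α, ε+4β−12) at every x ∈ (0,1), that is, (1−x)·x·w''(x) + (αx² + (β−8)x + (γ+4))·w'(x) + ((δ+8α)x + (ε+4β−12))·w(x) = 0 on (0,1). -/

import Mathlib

open Set

lemma heun_step (a b c d e m : ℂ) (f0 f1 f2 f3 : ℝ → ℂ)
    (h0 : ∀ x ∈ Ioo (0 : ℝ) 1, HasDerivAt (fun y => m * f0 y) (m * f1 x) x)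
    (h1 : ∀ x ∈ Ioo (0 : ℝ) 1, HasDerivAt f1 (f2 x) x)
    (h2 : ∀ x ∈ Ioo (0 : ℝ) 1, HasDerivAt f2 (f3 x) x)
    (h3 : ∀ x ∈ Ioo (0 : ℝ) 1, DifferentiableAt ℝ f3 x)
    (heq : ∀ x ∈ Ioo (0 : ℝ) 1,
      (1 - (x : ℂ)) * (x : ℂ) * f3 x + (a * (x : ℂ) ^ 2 + b * (x : ℂ) + c) * f2 x
        + (d * (x : ℂ) + e) * f1 x + m * f0 x = 0) :
    ∀ x ∈ Ioo (0 : ℝ) 1,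
      (1 - (x : ℂ)) * (x : ℂ) * deriv f3 x
        + (a * (x : ℂ) ^ 2 + (b - 2) * (x : ℂ) + (c + 1)) * f3 x
        + ((d + 2 * a) * (x : ℂ) + (e + b)) * f2 x + (m + d) * f1 x = 0 := by
  intro x hx
  set F : ℝ → ℂ := fun y =>
    (1 - (y : ℂ)) * (y : ℂ) * f3 y + (a * (y : ℂ) ^ 2 + b * (y : ℂ) + c) * f2 y
      + (d * (y : ℂ) + e) * f1 y + m * f0 y with hF
  have hev : F =ᶠ[nhds x] fun _ => (0 : ℂ) :=
    Filter.eventuallyEq_of_mem (Ioo_mem_nhds hx.1 hx.2) heq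
  have hF0 : deriv F x = 0 := by rw [hev.deriv_eq]; simp
  have hid : HasDerivAt (fun y : ℝ => (y : ℂ)) 1 x := by
    simpa using (hasDerivAt_id x).ofReal_comp
  have hP : HasDerivAt (fun y : ℝ => (1 - (y : ℂ)) * (y : ℂ)) (1 - 2 * (x : ℂ)) x := by
    have := ((hasDerivAt_const x (1 : ℂ)).fun_sub hid).fun_mul hid
    exact this.congr_deriv (by ring)
  have hsq : HasDerivAt (fun y : ℝ => (y : ℂ) ^ 2) (2 * (x : ℂ)) x := by
    simpa [pow_two, two_mul] using hid.fun_mul hid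
  have hQ : HasDerivAt (fun y : ℝ => a * (y : ℂ) ^ 2 + b * (y : ℂ) + c)
      (2 * a * (x : ℂ) + b) x := by
    have := ((hsq.const_mul a).fun_add (hid.const_mul b)).add_const c
    exact this.congr_deriv (by ring)
  have hR : HasDerivAt (fun y : ℝ => d * (y : ℂ) + e) d x := by
    have := (hid.const_mul d).add_const e
    exact this.congr_deriv (by ring)
  have t1 := hP.mul (h3 x hx).hasDerivAt
  have t2 := hQ.mul (h2 x hx)
  have t3 := hR.mul (h1 x hx)
  have t4 := h0 x hx
  have hD : deriv F x =
      ((1 - 2 * (x : ℂ)) * f3 x + (1 - (x : ℂ)) * (x : ℂ) * deriv f3 x)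
        + ((2 * a * (x : ℂ) + b) * f2 x + (a * (x : ℂ) ^ 2 + b * (x : ℂ) + c) * f3 x)
        + (d * f1 x + (d * (x : ℂ) + e) * f2 x) + m * f1 x :=
    (((t1.add t2).add t3).add t4).deriv
  have hz := hD ▸ hF0
  linear_combination hz

/-- If `δ = -3α` and `v` is a six times differentiable solution of the Heun
equation with parameters `(α, β, γ, δ, ε)` on `(0,1)`, then its fourth derivative satisfies
the Heun equation with parameters `(α, β-8, γ+4, δ+8α, ε+4β-12)` on `(0,1)`. -/
theorem stmt_3 (α β γ δ ε : ℂ) (hδ : δ = -3 * α) (v : ℝ → ℂ)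
    (hdiff : ∀ k ≤ 5, ∀ x ∈ Ioo (0 : ℝ) 1, DifferentiableAt ℝ (deriv^[k] v) x)
    (hheun : ∀ x ∈ Ioo (0 : ℝ) 1,
      (1 - (x : ℂ)) * (x : ℂ) * deriv^[2] v x
        + (α * (x : ℂ) ^ 2 + β * (x : ℂ) + γ) * deriv v x
        + (δ * (x : ℂ) + ε) * v x = 0) :
    ∀ x ∈ Ioo (0 : ℝ) 1,
      (1 - (x : ℂ)) * (x : ℂ) * deriv^[2] (deriv^[4] v) x
        + (α * (x : ℂ) ^ 2 + (β - 8) * (x : ℂ) + (γ + 4)) * deriv (deriv^[4] v) x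
        + ((δ + 8 * α) * (x : ℂ) + (ε + 4 * β - 12)) * deriv^[4] v x = 0 := by
  have hder : ∀ k, k ≤ 4 → ∀ x ∈ Ioo (0 : ℝ) 1,
      HasDerivAt (deriv^[k] v) (deriv^[k + 1] v x) x := by
    intro k hk x hx
    have h := (hdiff k (by omega) x hx).hasDerivAt
    rwa [show deriv^[k + 1] v x = deriv (deriv^[k] v) x from
      congrFun (Function.iterate_succ_apply' deriv k v) x]
  -- step 1
  have h1 := heun_step α β γ δ ε 0 (fun _ => 0) v (deriv v) (deriv^[2] v)
    (fun x _ => by simpa using hasDerivAt_const x (0 : ℂ))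
    (by simpa using hder 0 (by omega)) (hder 1 (by omega))
    (hdiff 2 (by omega))
    (fun x hx => by have := hheun x hx; simpa [Function.iterate_succ_apply'] using this)
  -- h1 top term: deriv (deriv^[2] v) = deriv^[3] v
  have h1' : ∀ x ∈ Ioo (0 : ℝ) 1,
      (1 - (x : ℂ)) * (x : ℂ) * deriv^[3] v x
        + (α * (x : ℂ) ^ 2 + (β - 2) * (x : ℂ) + (γ + 1)) * deriv^[2] v x
        + ((δ + 2 * α) * (x : ℂ) + (ε + β)) * deriv v x + (0 + δ) * v x = 0 := by
    intro x hx
    have := h1 x hx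
    rwa [show deriv (deriv^[2] v) x = deriv^[3] v x from congrFun (Function.iterate_succ_apply' deriv 2 v).symm x]
      at this
  have h2 := heun_step α (β - 2) (γ + 1) (δ + 2 * α) (ε + β) (0 + δ)
    v (deriv v) (deriv^[2] v) (deriv^[3] v)
    (fun x hx => ((hder 0 (by omega) x hx).const_mul (0 + δ)).congr_deriv (by simp))
    (hder 1 (by omega)) (hder 2 (by omega)) (hdiff 3 (by omega)) h1'
  have h2' : ∀ x ∈ Ioo (0 : ℝ) 1,
      (1 - (x : ℂ)) * (x : ℂ) * deriv^[4] v x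
        + (α * (x : ℂ) ^ 2 + (β - 2 - 2) * (x : ℂ) + (γ + 1 + 1)) * deriv^[3] v x
        + ((δ + 2 * α + 2 * α) * (x : ℂ) + (ε + β + (β - 2))) * deriv^[2] v x
        + (0 + δ + (δ + 2 * α)) * deriv v x = 0 := by
    intro x hx
    have := h2 x hx
    rwa [show deriv (deriv^[3] v) x = deriv^[4] v x from congrFun (Function.iterate_succ_apply' deriv 3 v).symm x]
      at this
  have h3 := heun_step α (β - 2 - 2) (γ + 1 + 1) (δ + 2 * α + 2 * α) (ε + β + (β - 2))
    (0 + δ + (δ + 2 * α)) (deriv v) (deriv^[2] v) (deriv^[3] v) (deriv^[4] v)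
    (fun x hx => ((hder 1 (by omega) x hx).const_mul _).congr_deriv (by simp))
    (hder 2 (by omega)) (hder 3 (by omega)) (hdiff 4 (by omega)) h2'
  have h3' : ∀ x ∈ Ioo (0 : ℝ) 1,
      (1 - (x : ℂ)) * (x : ℂ) * deriv^[5] v x
        + (α * (x : ℂ) ^ 2 + (β - 2 - 2 - 2) * (x : ℂ) + (γ + 1 + 1 + 1)) * deriv^[4] v x
        + ((δ + 2 * α + 2 * α + 2 * α) * (x : ℂ) + (ε + β + (β - 2) + (β - 2 - 2)))
            * deriv^[3] v x
        + (0 + δ + (δ + 2 * α) + (δ + 2 * α + 2 * α)) * deriv^[2] v x = 0 := by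
    intro x hx
    have := h3 x hx
    rwa [show deriv (deriv^[4] v) x = deriv^[5] v x from congrFun (Function.iterate_succ_apply' deriv 4 v).symm x]
      at this
  have h4 := heun_step α (β - 2 - 2 - 2) (γ + 1 + 1 + 1) (δ + 2 * α + 2 * α + 2 * α)
    (ε + β + (β - 2) + (β - 2 - 2)) (0 + δ + (δ + 2 * α) + (δ + 2 * α + 2 * α))
    (deriv^[2] v) (deriv^[3] v) (deriv^[4] v) (deriv^[5] v)
    (fun x hx => ((hder 2 (by omega) x hx).const_mul _).congr_deriv (by simp))
    (hder 3 (by omega)) (hder 4 (by omega)) (hdiff 5 le_rfl) h3'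
  intro x hx
  have h := h4 x hx
  rw [show deriv^[2] (deriv^[4] v) x = deriv (deriv^[5] v) x from by
      rw [← Function.iterate_add_apply deriv 2 4 v,
        ← congrFun (Function.iterate_succ_apply' deriv 5 v) x],
    show deriv (deriv^[4] v) x = deriv^[5] v x from
      congrFun (Function.iterate_succ_apply' deriv 4 v).symm x]
  subst hδ
  linear_combination h
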